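/- Consider the closed-loop interconnection of n identical nonlinear NI plants H₁ with the networked linear OSNI controller 𝓛ₙ ⊗ M(s) over an undirected connected graph (U₂ = Y₁, U₁ = Y₂), where the controller realization (A,B,C) is minimal with A Hurwitz, Assumptions I and II hold for H₁ and for (A,B,C), and Assumption IV holds with constant γ ∈ (0,1). If along a closed-loop trajectory the controller output differences are constant on a nondegenerate interval, i.e. d/dt(yᶜᵢ(t) − yᶜⱼ(t)) ≡ 0 for every edge (i,j) with a_{ij} = 1, then on that interval the plant outputs agree: yᵢ(t) = yⱼ(t) for all i,j ∈ {1,…,n}, i.e. output consensus holds. -/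

import Mathlib

noncomputable section

open scoped RealInnerProductSpace
open Filter

abbrev Vec (n : ℕ) : Type := EuclideanSpace ℝ (Fin n)

def IsTrajectory {p m : ℕ} (f : Vec p → Vec m → Vec p)
    (x : ℝ → Vec p) (u : ℝ → Vec m) : Prop :=
  ∀ t : ℝ, HasDerivAt x (f (x t) (u t)) t

def PosDefFn {E : Type*} [Zero E] (V : E → ℝ) : Prop :=
  V 0 = 0 ∧ ∀ x, x ≠ 0 → 0 < V x

def NIStorage {p m : ℕ} (f : Vec p → Vec m → Vec p) (h : Vec p → Vec m)
    (V : Vec p → ℝ) : Prop :=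
  ∀ (x : ℝ → Vec p) (u : ℝ → Vec m), IsTrajectory f x u →
    ∀ t : ℝ, deriv (fun s => V (x s)) t ≤ ⟪u t, deriv (fun s => h (x s)) t⟫

def OSNIStorage {p m : ℕ} (f : Vec p → Vec m → Vec p) (h : Vec p → Vec m)
    (V : Vec p → ℝ) (δ : ℝ) : Prop :=
  ∀ (x : ℝ → Vec p) (u : ℝ → Vec m), IsTrajectory f x u →
    ∀ t : ℝ, deriv (fun s => V (x s)) t ≤
      ⟪u t, deriv (fun s => h (x s)) t⟫ - δ * ‖deriv (fun s => h (x s)) t‖ ^ 2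

def linF {q m : ℕ} (A : Matrix (Fin q) (Fin q) ℝ) (B : Matrix (Fin q) (Fin m) ℝ) :
    Vec q → Vec m → Vec q :=
  fun x u => Matrix.toEuclideanLin A x + Matrix.toEuclideanLin B u

def linH {q m : ℕ} (C : Matrix (Fin m) (Fin q) ℝ) : Vec q → Vec m :=
  fun x => Matrix.toEuclideanLin C x

/-- Assumption I for a system (f, h): over any nondegenerate time interval, the output
remains constant iff the state remains constant; moreover the state is identically zero
iff the output is identically zero. -/
def AssumptionI {p m : ℕ} (f : Vec p → Vec m → Vec p) (h : Vec p → Vec m) : Prop :=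
  ∀ (x : ℝ → Vec p) (u : ℝ → Vec m), IsTrajectory f x u →
    ∀ ta tb : ℝ, ta < tb →
      (((∀ s ∈ Set.Icc ta tb, ∀ s' ∈ Set.Icc ta tb, x s = x s') ↔
          (∀ s ∈ Set.Icc ta tb, ∀ s' ∈ Set.Icc ta tb, h (x s) = h (x s'))) ∧
        ((∀ s ∈ Set.Icc ta tb, x s = 0) ↔ (∀ s ∈ Set.Icc ta tb, h (x s) = 0)))

/-- Assumption II for a system (f, h): over any nondegenerate time interval, the state
remaining constant implies the input remains constant; moreover the state being
identically zero implies the input is identically zero. -/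
def AssumptionII {p m : ℕ} (f : Vec p → Vec m → Vec p) (h : Vec p → Vec m) : Prop :=
  ∀ (x : ℝ → Vec p) (u : ℝ → Vec m), IsTrajectory f x u →
    ∀ ta tb : ℝ, ta < tb →
      (((∀ s ∈ Set.Icc ta tb, ∀ s' ∈ Set.Icc ta tb, x s = x s') →
          (∀ s ∈ Set.Icc ta tb, ∀ s' ∈ Set.Icc ta tb, u s = u s')) ∧
        ((∀ s ∈ Set.Icc ta tb, x s = 0) → (∀ s ∈ Set.Icc ta tb, u s = 0)))

/-- Assumption III for the open-loop cascade of H₁ = (f₁, h₁) followed by H₂ = (f₂, h₂):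
there is a uniform constant γ ∈ (0,1) such that whenever H₁ is driven by a constant input
u₁bar, its output is fed as input to H₂, and the output of H₂ is constant, y₂(t) ≡ y₂bar,
one has u₁barᵀ y₂bar ≤ γ |u₁bar|². -/
def AssumptionIII {p m : ℕ} (f₁ : Vec p → Vec m → Vec p) (h₁ : Vec p → Vec m)
    (f₂ : Vec p → Vec m → Vec p) (h₂ : Vec p → Vec m) (γ : ℝ) : Prop :=
  ∀ (x₁ : ℝ → Vec p) (u₁ : ℝ → Vec m) (x₂ : ℝ → Vec p)
    (u₁bar y₂bar : Vec m) (ta tb : ℝ), ta < tb →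
    IsTrajectory f₁ x₁ u₁ →
    IsTrajectory f₂ x₂ (fun t => h₁ (x₁ t)) →
    (∀ s ∈ Set.Icc ta tb, u₁ s = u₁bar) →
    (∀ s ∈ Set.Icc ta tb, h₂ (x₂ s) = y₂bar) →
    ⟪u₁bar, y₂bar⟫ ≤ γ * ‖u₁bar‖ ^ 2

/-- The positive feedback interconnection of H₁ = (f₁, h₁) and H₂ = (f₂, h₂) with zero
external input: u₁ = y₂ and u₂ = y₁. -/
def ClosedLoop {p m : ℕ} (f₁ : Vec p → Vec m → Vec p) (h₁ : Vec p → Vec m)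
    (f₂ : Vec p → Vec m → Vec p) (h₂ : Vec p → Vec m)
    (x₁ x₂ : ℝ → Vec p) : Prop :=
  IsTrajectory f₁ x₁ (fun t => h₂ (x₂ t)) ∧
  IsTrajectory f₂ x₂ (fun t => h₁ (x₁ t))

/-- A real square matrix is Hurwitz if every eigenvalue of it (viewed as a complex
matrix) has negative real part. -/
def IsHurwitz {q : ℕ} (A : Matrix (Fin q) (Fin q) ℝ) : Prop :=
  ∀ μ ∈ spectrum ℂ (A.map (algebraMap ℝ ℂ)), μ.re < 0

/-- Controllability of the pair (A, B). -/
def Controllable {q m : ℕ} (A : Matrix (Fin q) (Fin q) ℝ)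
    (B : Matrix (Fin q) (Fin m) ℝ) : Prop :=
  Submodule.span ℝ {v : Fin q → ℝ | ∃ (k : ℕ) (w : Fin m → ℝ),
    v = (A ^ k * B).mulVec w} = ⊤

/-- Observability of the pair (A, C). -/
def Observable {q m : ℕ} (A : Matrix (Fin q) (Fin q) ℝ)
    (C : Matrix (Fin m) (Fin q) ℝ) : Prop :=
  ∀ v : Fin q → ℝ, (∀ k : ℕ, (C * A ^ k).mulVec v = 0) → v = 0

/-- The undirected graph with adjacency matrix a is connected: every pair of nodes is
joined by a path of edges. -/
def AdjConnected {n : ℕ} (a : Fin n → Fin n → ℝ) : Prop :=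
  ∀ i j : Fin n, Relation.ReflTransGen (fun k l => a k l = 1) i j

/-- The i-th block of the output of the networked controller 𝓛ₙ ⊗ M(s):
(Y₂)ᵢ = Σⱼ a_{ij}(yᶜᵢ − yᶜⱼ) where yᶜᵢ = C xᶜᵢ. -/
def netOut {q m n : ℕ} (C : Matrix (Fin m) (Fin q) ℝ) (a : Fin n → Fin n → ℝ)
    (xc : Fin n → ℝ → Vec q) (i : Fin n) (t : ℝ) : Vec m :=
  ∑ j, a i j • (linH C (xc i t) - linH C (xc j t))

/-- The closed-loop interconnection of the n identical plants (f, h) with the networked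
controller 𝓛ₙ ⊗ M(s): the controller inputs are the plant outputs, u₂ᵢ = yᵢ, and the
plant inputs are the blocks of the networked controller output, u₁ᵢ = (Y₂)ᵢ. -/
def NetClosedLoop {p q m n : ℕ} (f : Vec p → Vec m → Vec p) (h : Vec p → Vec m)
    (A : Matrix (Fin q) (Fin q) ℝ) (B : Matrix (Fin q) (Fin m) ℝ)
    (C : Matrix (Fin m) (Fin q) ℝ) (a : Fin n → Fin n → ℝ)
    (xp : Fin n → ℝ → Vec p) (xc : Fin n → ℝ → Vec q) : Prop :=
  (∀ i, IsTrajectory f (xp i) (fun t => netOut C a xc i t)) ∧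
  (∀ i, IsTrajectory (linF A B) (xc i) (fun t => h (xp i t)))

/-- Assumption IV for the open-loop interconnection of the parallel plant network 𝓗₁
followed by the controller network 𝓛ₙ ⊗ M(s): with constant plant input U₁ ≡ Ū₁, plant
outputs fed to the controller network, and constant controller-network output Y₂ ≡ Ȳ₂,
one has Ū₁ᵀȲ₂ ≤ γ |Ū₁|². -/
def AssumptionIV {p q m n : ℕ} (f : Vec p → Vec m → Vec p) (h : Vec p → Vec m)
    (A : Matrix (Fin q) (Fin q) ℝ) (B : Matrix (Fin q) (Fin m) ℝ)
    (C : Matrix (Fin m) (Fin q) ℝ) (a : Fin n → Fin n → ℝ) (γ : ℝ) : Prop :=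
  ∀ (xp : Fin n → ℝ → Vec p) (u₁ : Fin n → ℝ → Vec m) (xc : Fin n → ℝ → Vec q)
    (U₁bar Y₂bar : Fin n → Vec m) (ta tb : ℝ), ta < tb →
    (∀ i, IsTrajectory f (xp i) (u₁ i)) →
    (∀ i, IsTrajectory (linF A B) (xc i) (fun t => h (xp i t))) →
    (∀ i, ∀ t ∈ Set.Icc ta tb, u₁ i t = U₁bar i) →
    (∀ i, ∀ t ∈ Set.Icc ta tb, netOut C a xc i t = Y₂bar i) →
    ∑ i, ⟪U₁bar i, Y₂bar i⟫ ≤ γ * ∑ i, ‖U₁bar i‖ ^ 2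

/-!
Constant edge differences make the networked controller output Y₂ constant on the
interval, and in the closed loop the plant input U₁ equals Y₂. Assumption IV, applied to
the closed-loop trajectory itself, then gives |Y₂|² ≤ γ|Y₂|² with γ < 1, so Y₂ ≡ 0.
Since ⟨Y, (𝓛 ⊗ I) Y⟩ = ½ Σᵢⱼ aᵢⱼ |yᵢ − yⱼ|², the controller outputs agree along every
edge, hence everywhere by connectivity. The difference of two controller copies is a
trajectory of the controller driven by the difference of the plant outputs, with zero
output: Assumption I makes its state zero and Assumption II then makes its input zero.
-/

open Finset

section Laplacian

variable {ι E : Type*} [Fintype ι] [NormedAddCommGroup E] [InnerProductSpace ℝ E]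

theorem two_mul_sum_inner_laplacian {a : ι → ι → ℝ} (hsymm : ∀ i j, a i j = a j i)
    (y : ι → E) :
    2 * ∑ i, ⟪y i, ∑ j, a i j • (y i - y j)⟫ = ∑ i, ∑ j, a i j * ‖y i - y j‖ ^ 2 := by
  set S := ∑ i, ⟪y i, ∑ j, a i j • (y i - y j)⟫
  have hS : S = ∑ i, ∑ j, a i j * ⟪y i, y i - y j⟫ := by
    simp only [S, inner_sum, real_inner_smul_right]
  have hS' : S = ∑ i, ∑ j, a i j * -⟪y j, y i - y j⟫ := by
    rw [hS, Finset.sum_comm]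
    refine sum_congr rfl fun i _ => sum_congr rfl fun j _ => ?_
    rw [hsymm, ← inner_neg_right, neg_sub]
  calc 2 * S = ∑ i, ∑ j, (a i j * ⟪y i, y i - y j⟫ + a i j * -⟪y j, y i - y j⟫) := by
        rw [two_mul]
        nth_rw 1 [hS]
        rw [hS']
        simp only [← sum_add_distrib]
    _ = ∑ i, ∑ j, a i j * ‖y i - y j‖ ^ 2 := by
        refine sum_congr rfl fun i _ => sum_congr rfl fun j _ => ?_
        rw [← real_inner_self_eq_norm_sq, inner_sub_left]
        ring

theorem eq_of_laplacian_eq_zero {a : ι → ι → ℝ} (hsymm : ∀ i j, a i j = a j i)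
    (hnonneg : ∀ i j, 0 ≤ a i j) {y : ι → E} (hy : ∀ i, ∑ j, a i j • (y i - y j) = 0)
    {i j : ι} (hij : 0 < a i j) : y i = y j := by
  have hterm_nonneg : ∀ k l, 0 ≤ a k l * ‖y k - y l‖ ^ 2 :=
    fun k l => mul_nonneg (hnonneg k l) (sq_nonneg _)
  have hsum : ∑ k, ∑ l, a k l * ‖y k - y l‖ ^ 2 = 0 := by
    rw [← two_mul_sum_inner_laplacian hsymm]
    simp only [hy, inner_zero_right, sum_const_zero, mul_zero]
  have hrow := (sum_eq_zero_iff_of_nonneg fun k _ =>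
    sum_nonneg fun l _ => hterm_nonneg k l).mp hsum i (mem_univ i)
  have hij_term :=
    (sum_eq_zero_iff_of_nonneg fun l _ => hterm_nonneg i l).mp hrow j (mem_univ j)
  rw [mul_eq_zero, or_iff_right hij.ne', sq_eq_zero_iff, norm_eq_zero, sub_eq_zero]
    at hij_term
  exact hij_term

end Laplacian

theorem eq_zero_of_sum_norm_sq_le_mul {ι E : Type*} [Fintype ι] [NormedAddCommGroup E]
    {v : ι → E} {γ : ℝ} (hγ : γ < 1) (h : ∑ i, ‖v i‖ ^ 2 ≤ γ * ∑ i, ‖v i‖ ^ 2)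
    (i : ι) : v i = 0 := by
  have hnonneg : ∀ k ∈ univ, 0 ≤ ‖v k‖ ^ 2 := fun k _ => sq_nonneg _
  have hsum : ∑ k, ‖v k‖ ^ 2 = 0 := by nlinarith [sum_nonneg hnonneg]
  simpa using (sum_eq_zero_iff_of_nonneg hnonneg).mp hsum i (mem_univ i)

theorem AdjConnected.eq_of_forall_adj {α : Type*} {n : ℕ} {a : Fin n → Fin n → ℝ}
    (hconn : AdjConnected a) {y : Fin n → α} (hy : ∀ k l, a k l = 1 → y k = y l)
    (i j : Fin n) : y i = y j := by
  induction hconn i j with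
  | refl => rfl
  | tail _ hkl ih => exact ih.trans (hy _ _ hkl)

theorem eqOn_Icc_of_deriv_eq_zero {E : Type*} [NormedAddCommGroup E] [NormedSpace ℝ E]
    {g : ℝ → E} (hg : Differentiable ℝ g) {ta tb : ℝ}
    (h0 : ∀ t ∈ Set.Icc ta tb, deriv g t = 0) : ∀ t ∈ Set.Icc ta tb, g t = g ta :=
  constant_of_has_deriv_right_zero hg.continuous.continuousOn fun t ht =>
    (h0 t (Set.Ico_subset_Icc_self ht) ▸ (hg t).hasDerivAt).hasDerivWithinAt

theorem IsTrajectory.differentiable {p m : ℕ} {f : Vec p → Vec m → Vec p}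
    {x : ℝ → Vec p} {u : ℝ → Vec m} (hx : IsTrajectory f x u) : Differentiable ℝ x :=
  fun t => (hx t).differentiableAt

theorem IsTrajectory.sub_linF {q m : ℕ} {A : Matrix (Fin q) (Fin q) ℝ}
    {B : Matrix (Fin q) (Fin m) ℝ} {x x' : ℝ → Vec q} {u u' : ℝ → Vec m}
    (hx : IsTrajectory (linF A B) x u) (hx' : IsTrajectory (linF A B) x' u') :
    IsTrajectory (linF A B) (x - x') (u - u') := by
  intro t
  have hlin : linF A B ((x - x') t) ((u - u') t)
      = linF A B (x t) (u t) - linF A B (x' t) (u' t) := by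
    simp only [linF, Pi.sub_apply, map_sub]
    abel
  exact hlin ▸ (hx t).sub (hx' t)

theorem Differentiable.linH {q m : ℕ} (C : Matrix (Fin m) (Fin q) ℝ) {x : ℝ → Vec q}
    (hx : Differentiable ℝ x) : Differentiable ℝ fun s => linH C (x s) :=
  (LinearMap.toContinuousLinearMap (Matrix.toEuclideanLin C)).differentiable.comp hx

theorem netOut_eqOn_Icc_of_deriv_edge_eq_zero {q m n : ℕ} (C : Matrix (Fin m) (Fin q) ℝ)
    {a : Fin n → Fin n → ℝ} (h01 : ∀ i j, a i j = 0 ∨ a i j = 1)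
    {xc : Fin n → ℝ → Vec q} (hxc : ∀ i, Differentiable ℝ (xc i)) {ta tb : ℝ}
    (hconst : ∀ i j : Fin n, a i j = 1 → ∀ t ∈ Set.Icc ta tb,
      deriv (fun s => linH C (xc i s) - linH C (xc j s)) t = 0)
    (i : Fin n) : ∀ t ∈ Set.Icc ta tb, netOut C a xc i t = netOut C a xc i ta := by
  intro t ht
  refine sum_congr rfl fun j _ => ?_
  rcases h01 i j with hij | hij
  · simp only [hij, zero_smul]
  · rw [hij, one_smul, one_smul]
    exact eqOn_Icc_of_deriv_eq_zero (((hxc i).linH C).sub ((hxc j).linH C))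
      (hconst i j hij) t ht

theorem AssumptionIV.netOut_eq_zero {p q m n : ℕ} {f : Vec p → Vec m → Vec p}
    {h : Vec p → Vec m} {A : Matrix (Fin q) (Fin q) ℝ} {B : Matrix (Fin q) (Fin m) ℝ}
    {C : Matrix (Fin m) (Fin q) ℝ} {a : Fin n → Fin n → ℝ} {γ : ℝ}
    (hAIV : AssumptionIV f h A B C a γ) (hγ : γ < 1)
    {xp : Fin n → ℝ → Vec p} {xc : Fin n → ℝ → Vec q}
    (hcl : NetClosedLoop f h A B C a xp xc)
    {ta tb : ℝ} (htatb : ta < tb)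
    (hY : ∀ i, ∀ t ∈ Set.Icc ta tb, netOut C a xc i t = netOut C a xc i ta) :
    ∀ i, netOut C a xc i ta = 0 := by
  have h := hAIV xp _ xc _ _ ta tb htatb hcl.1 hcl.2 hY hY
  simp only [real_inner_self_eq_norm_sq] at h
  exact eq_zero_of_sum_norm_sq_le_mul hγ h

theorem input_eq_zero_of_output_eq_zero {p m : ℕ} {f : Vec p → Vec m → Vec p}
    {h : Vec p → Vec m} (hAI : AssumptionI f h) (hAII : AssumptionII f h)
    {x : ℝ → Vec p} {u : ℝ → Vec m} (hx : IsTrajectory f x u)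
    {ta tb : ℝ} (htatb : ta < tb)
    (hy : ∀ s ∈ Set.Icc ta tb, h (x s) = 0) : ∀ s ∈ Set.Icc ta tb, u s = 0 :=
  (hAII x u hx ta tb htatb).2 ((hAI x u hx ta tb htatb).2.mpr hy)

theorem stmt11_general {p q m n : ℕ}
    (f : Vec p → Vec m → Vec p) (h : Vec p → Vec m)
    (A : Matrix (Fin q) (Fin q) ℝ) (B : Matrix (Fin q) (Fin m) ℝ)
    (C : Matrix (Fin m) (Fin q) ℝ)
    (a : Fin n → Fin n → ℝ)
    (hsymm : ∀ i j, a i j = a j i)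
    (h01 : ∀ i j, a i j = 0 ∨ a i j = 1)
    (hconn : AdjConnected a)
    (hAIc : AssumptionI (linF A B) (linH C)) (hAIIc : AssumptionII (linF A B) (linH C))
    (γ : ℝ) (hγ1 : γ < 1)
    (hAIV : AssumptionIV f h A B C a γ)
    (xp : Fin n → ℝ → Vec p) (xc : Fin n → ℝ → Vec q)
    (hcl : NetClosedLoop f h A B C a xp xc)
    (ta tb : ℝ) (htatb : ta < tb)
    (hconst : ∀ i j : Fin n, a i j = 1 →
      ∀ t ∈ Set.Icc ta tb,
        deriv (fun s => linH C (xc i s) - linH C (xc j s)) t = 0) :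
    ∀ t ∈ Set.Icc ta tb, ∀ i j : Fin n, h (xp i t) = h (xp j t) := by
  have hY_const := netOut_eqOn_Icc_of_deriv_edge_eq_zero C h01
    (fun i => (hcl.2 i).differentiable) hconst
  have hY_zero : ∀ i, ∀ t ∈ Set.Icc ta tb, netOut C a xc i t = 0 := fun i t ht => by
    rw [hY_const i t ht, hAIV.netOut_eq_zero hγ1 hcl htatb hY_const i]
  have hnonneg : ∀ i j, 0 ≤ a i j := fun i j => (h01 i j).elim (·.ge) (·.symm ▸ zero_le_one)
  have hyc_eq : ∀ t ∈ Set.Icc ta tb, ∀ i j, linH C (xc i t) = linH C (xc j t) := fun t ht =>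
    hconn.eq_of_forall_adj fun k l hkl =>
      eq_of_laplacian_eq_zero hsymm hnonneg (fun i => hY_zero i t ht) (hkl.symm ▸ zero_lt_one)
  intro t ht i j
  have hyc_sub : ∀ s ∈ Set.Icc ta tb, linH C ((xc i - xc j) s) = 0 := fun s hs => by
    simp only [linH, Pi.sub_apply, map_sub]
    exact sub_eq_zero.mpr (hyc_eq s hs i j)
  exact sub_eq_zero.mp <| input_eq_zero_of_output_eq_zero hAIc hAIIc
    ((hcl.2 i).sub_linF (hcl.2 j)) htatb hyc_sub t ht

/-- In the closed-loop interconnection of n identical nonlinear NI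
plants H₁ = (f, h) with the networked linear OSNI controller 𝓛ₙ ⊗ M(s) over an
undirected connected graph, where (A,B,C) is minimal with A Hurwitz, Assumptions I and
II hold for the plant and the controller, and Assumption IV holds with γ ∈ (0,1): if
along a closed-loop trajectory the controller output differences are constant on a
nondegenerate interval (d/dt(yᶜᵢ − yᶜⱼ) ≡ 0 for every edge a_{ij} = 1), then on that
interval the plant outputs agree, i.e. output consensus holds. -/
theorem stmt11 {p q m n : ℕ}
    (f : Vec p → Vec m → Vec p) (h : Vec p → Vec m)
    (K : NNReal) (hf : LipschitzWith K (Function.uncurry f)) (hh : ContDiff ℝ 1 h)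
    (A : Matrix (Fin q) (Fin q) ℝ) (B : Matrix (Fin q) (Fin m) ℝ)
    (C : Matrix (Fin m) (Fin q) ℝ)
    (hHur : IsHurwitz A) (hctrb : Controllable A B) (hobs : Observable A C)
    (a : Fin n → Fin n → ℝ)
    (hsymm : ∀ i j, a i j = a j i) (hdiag : ∀ i, a i i = 0)
    (h01 : ∀ i j, a i j = 0 ∨ a i j = 1)
    (hconn : AdjConnected a)
    (hAIp : AssumptionI f h) (hAIIp : AssumptionII f h)
    (hAIc : AssumptionI (linF A B) (linH C)) (hAIIc : AssumptionII (linF A B) (linH C))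
    (γ : ℝ) (hγ0 : 0 < γ) (hγ1 : γ < 1)
    (hAIV : AssumptionIV f h A B C a γ)
    (xp : Fin n → ℝ → Vec p) (xc : Fin n → ℝ → Vec q)
    (hcl : NetClosedLoop f h A B C a xp xc)
    (ta tb : ℝ) (htatb : ta < tb)
    (hconst : ∀ i j : Fin n, a i j = 1 →
      ∀ t ∈ Set.Icc ta tb,
        deriv (fun s => linH C (xc i s) - linH C (xc j s)) t = 0) :
    ∀ t ∈ Set.Icc ta tb, ∀ i j : Fin n, h (xp i t) = h (xp j t) :=
  stmt11_general f h A B C a hsymm h01 hconn hAIc hAIIc γ hγ1 hAIV xp xc hcl ta tb htatb hconst
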